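/- arXiv:2201.12679 — 3 statements merged into one kernel-verified Lean document; each statement's English description precedes it below -/
import Mathlib

section
/- If a separable metrizable space X admits a one-point connectification, then X is cohesive: every point of X has a neighborhood containing no nonempty proper clopen subset of X. -/
open TopologicalSpace Set Topology

/-- `X` admits a one-point connectification: a connected separable metrizable space `Y`
containing `X` as a subspace so that the remainder is a single point. -/
theorem stmt5 (X : Type*) [TopologicalSpace X] [MetrizableSpace X] [SecondCountableTopology X]
    (Y : Type*) [TopologicalSpace Y] [MetrizableSpace Y] [SecondCountableTopology Y]
    [ConnectedSpace Y] (e : X → Y) (he : IsEmbedding e)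
    (p : Y) (hp : (Set.range e)ᶜ = {p}) :
    ∀ x : X, ∃ U ∈ nhds x,
      ∀ C : Set X, IsClopen C → C.Nonempty → C ≠ Set.univ → ¬ C ⊆ U := by
  letI := TopologicalSpace.metrizableSpaceMetric Y
  intro x
  have hpx : p ≠ e x := by
    intro h
    have : e x ∈ (Set.range e)ᶜ := by rw [hp, h]; exact rfl
    exact this ⟨x, rfl⟩
  -- separate p from e x with V whose closure misses p
  obtain ⟨V, W, hV, hW, hxV, hpW, hVW⟩ := t2_separation hpx.symm
  refine ⟨e ⁻¹' V, he.continuous.continuousAt.preimage_mem_nhds (hV.mem_nhds hxV), ?_⟩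
  intro C hC hCne hCuniv hCU
  have hrange : Set.range e = {p}ᶜ := by
    rw [← hp, compl_compl]
  have hropen : IsOpen (Set.range e) := by
    rw [hrange]; exact isClosed_singleton.isOpen_compl
  have hoe : IsOpenEmbedding e := ⟨he, hropen⟩
  -- e '' C is open in Y
  have hopen : IsOpen (e '' C) := hoe.isOpenMap _ hC.isOpen
  -- closure of e '' C avoids p
  have hclV : closure (e '' C) ⊆ Wᶜ := by
    apply closure_minimal
    · intro y ⟨c, hc, hcy⟩
      intro hyW
      exact (Set.disjoint_left.mp hVW) (hcy ▸ hCU hc) hyW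
    · exact hW.isClosed_compl
  have hpcl : p ∉ closure (e '' C) := fun h => hclV h hpW
  have hsub : closure (e '' C) ⊆ Set.range e := by
    intro y hy
    by_contra hyr
    have : y ∈ ({p} : Set Y) := hp ▸ hyr
    exact hpcl (this ▸ hy)
  -- e '' C is closed in Y
  have hclosed : IsClosed (e '' C) := by
    rw [← closure_subset_iff_isClosed]
    intro y hy
    obtain ⟨x', rfl⟩ := hsub hy
    have : x' ∈ closure C := by
      rw [he.toIsInducing.closure_eq_preimage_closure_image]
      exact hy
    exact ⟨x', hC.isClosed.closure_subset this, rfl⟩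
  have : e '' C = ∅ ∨ e '' C = Set.univ :=
    isClopen_iff.mp ⟨hclosed, hopen⟩
  rcases this with h | h
  · exact hCne.image e |>.ne_empty h
  · have : p ∈ e '' C := h ▸ Set.mem_univ p
    obtain ⟨c, _, hcp⟩ := this
    have : p ∈ (Set.range e)ᶜ := hp ▸ rfl
    exact this ⟨c, hcp⟩
end

section
/- A countable product of almost zero-dimensional separable metrizable spaces is almost zero-dimensional. -/
open TopologicalSpace Set

/-- A topology is zero-dimensional if it has a base of clopen sets. -/
def IsZeroDim (X : Type*) (T : TopologicalSpace X) : Prop :=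
  ∃ B : Set (Set X), @IsTopologicalBasis X T B ∧ ∀ U ∈ B, @IsClopen X T U

/-- A topology `T` is almost zero-dimensional if there is a zero-dimensional separable
metrizable topology `W` coarser than `T` such that every point has a `T`-neighborhood
base of `W`-closed sets. -/
def IsAZD (X : Type*) (T : TopologicalSpace X) : Prop :=
  ∃ W : TopologicalSpace X,
    (∀ s : Set X, @IsOpen X W s → @IsOpen X T s) ∧
    @MetrizableSpace X W ∧ @SecondCountableTopology X W ∧
    IsZeroDim X W ∧
    ∀ x : X, ∀ U ∈ @nhds X T x, ∃ V ∈ @nhds X T x, V ⊆ U ∧ @IsClosed X W V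

lemma aux_coarser {ι : Type} {X : ι → Type*} (T V : ∀ i, TopologicalSpace (X i))
    (h : ∀ i, ∀ s : Set (X i), @IsOpen (X i) (V i) s → @IsOpen (X i) (T i) s) :
    ∀ s : Set (∀ i, X i), @IsOpen (∀ i, X i) (@Pi.topologicalSpace ι X V) s →
      @IsOpen (∀ i, X i) (@Pi.topologicalSpace ι X T) s := by
  refine isOpen_implies_isOpen_iff.mpr ?_
  exact le_iInf fun i => iInf_le_of_le i
    (induced_mono (isOpen_implies_isOpen_iff.mp (h i)))

lemma aux_met {ι : Type} [Countable ι] (X : ι → Type*) (W : ∀ i, TopologicalSpace (X i))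
    (hm : ∀ i, @MetrizableSpace (X i) (W i)) (hsc : ∀ i, @SecondCountableTopology (X i) (W i)) :
    @MetrizableSpace (∀ i, X i) (@Pi.topologicalSpace ι X W) := by
  letI := W; letI := hm; letI := hsc
  haveI : ∀ i, T3Space (X i) := fun i => by
    letI := metrizableSpaceMetric (X i); infer_instance
  infer_instance

lemma aux_sc {ι : Type} [Countable ι] (X : ι → Type*) (W : ∀ i, TopologicalSpace (X i))
    (hm : ∀ i, @SecondCountableTopology (X i) (W i)) :
    @SecondCountableTopology (∀ i, X i) (@Pi.topologicalSpace ι X W) := by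
  letI := W; letI := hm; infer_instance

lemma aux_zd {ι : Type} (X : ι → Type*) (W : ∀ i, TopologicalSpace (X i))
    (hzd : ∀ i, IsZeroDim (X i) (W i)) :
    IsZeroDim (∀ i, X i) (@Pi.topologicalSpace ι X W) := by
  letI := W
  choose B hB hBclopen using hzd
  refine ⟨_, isTopologicalBasis_pi hB, ?_⟩
  rintro S ⟨U, F, hU, rfl⟩
  rw [Set.pi_def]
  exact isClopen_biInter_finset fun i hi =>
    ((hBclopen i _ (hU i hi)).preimage (continuous_apply i))

lemma aux_cl {ι : Type} (X : ι → Type*) (W : ∀ i, TopologicalSpace (X i))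
    (I : Set ι) (V : ∀ i, Set (X i)) (hV : ∀ i, @IsClosed (X i) (W i) (V i)) :
    @IsClosed (∀ i, X i) (@Pi.topologicalSpace ι X W) (I.pi V) := by
  letI := W
  rw [Set.pi_def]
  exact isClosed_biInter fun i _ => (hV i).preimage (continuous_apply i)

lemma aux_nhds {ι : Type} (X : ι → Type*) (T W : ∀ i, TopologicalSpace (X i))
    (hbase : ∀ i, ∀ x : X i, ∀ U ∈ @nhds (X i) (T i) x,
      ∃ V ∈ @nhds (X i) (T i) x, V ⊆ U ∧ @IsClosed (X i) (W i) V) :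
    ∀ x : ∀ i, X i, ∀ U ∈ @nhds (∀ i, X i) (@Pi.topologicalSpace ι X T) x,
      ∃ V ∈ @nhds (∀ i, X i) (@Pi.topologicalSpace ι X T) x,
        V ⊆ U ∧ @IsClosed (∀ i, X i) (@Pi.topologicalSpace ι X W) V := by
  letI := T
  intro x U hU
  rw [nhds_pi, Filter.mem_pi] at hU
  obtain ⟨I, hIfin, t, ht, hts⟩ := hU
  choose V hV hVt hVcl using fun i => hbase i (x i) (t i) (ht i)
  refine ⟨I.pi V, ?_, fun y hy => hts fun i hi => hVt i (hy i hi), aux_cl X W I V hVcl⟩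
  rw [nhds_pi]
  exact Filter.pi_mem_pi hIfin fun i _ => hV i

theorem stmt14 (ι : Type) [Countable ι] (X : ι → Type*)
    [∀ i, TopologicalSpace (X i)] [∀ i, MetrizableSpace (X i)]
    [∀ i, SecondCountableTopology (X i)]
    (h : ∀ i, IsAZD (X i) inferInstance) :
    IsAZD (∀ i, X i) inferInstance := by
  choose W hWT hmet hsc hzd hbase using h
  exact ⟨@Pi.topologicalSpace ι X W, aux_coarser _ W hWT, aux_met X W hmet hsc,
    aux_sc X W hsc, aux_zd X W hzd, aux_nhds X _ W hbase⟩
end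

section
/- Complete Erdős space E_c = {(x_n) ∈ ℓ² : each x_n ∈ {0} ∪ {1/k : k ≥ 1}} is totally disconnected: every connected subset of E_c has at most one point. -/
open Set

lemma countable_preconnected_subsingleton {T : Set ℝ} (hc : T.Countable)
    (hp : IsPreconnected T) : T.Subsingleton := by
  intro a ha b hb
  by_contra hab
  rcases lt_or_gt_of_ne hab with h | h
  · have : Icc a b ⊆ T := hp.Icc_subset ha hb
    have hcc : (Icc a b).Countable := hc.mono this
    have := Cardinal.mk_Icc_real h
    have hcc' := hcc.le_aleph0
    rw [this] at hcc'
    exact absurd hcc' (by simpa using Cardinal.aleph0_lt_continuum.not_ge)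
  · have : Icc b a ⊆ T := hp.Icc_subset hb ha
    have hcc : (Icc b a).Countable := hc.mono this
    have := Cardinal.mk_Icc_real h
    have hcc' := hcc.le_aleph0
    rw [this] at hcc'
    exact absurd hcc' (by simpa using Cardinal.aleph0_lt_continuum.not_ge)

lemma eval_continuous (n : ℕ) : Continuous fun f : lp (fun _ : ℕ => ℝ) 2 => f n := by
  have : LipschitzWith 1 fun f : lp (fun _ : ℕ => ℝ) 2 => f n := by
    intro f g
    rw [edist_dist, edist_dist, dist_eq_norm, dist_eq_norm]
    have : ‖(f - g : lp (fun _ : ℕ => ℝ) 2) n‖ ≤ ‖f - g‖ :=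
      lp.norm_apply_le_norm (by norm_num) _ _
    simp only [ENNReal.coe_one, one_mul]
    exact ENNReal.ofReal_le_ofReal (by simpa using this)
  exact this.continuous

/-- Complete Erdős space: points of `ℓ²` all of whose coordinates lie in
`{0} ∪ {1/k : k ≥ 1}`. -/
def ErdosC : Set (lp (fun _ : ℕ => ℝ) 2) :=
  {x | ∀ n : ℕ, x n = 0 ∨ ∃ k : ℕ, 1 ≤ k ∧ x n = 1 / (k : ℝ)}

theorem stmt15 : ∀ S : Set ErdosC, IsPreconnected S → S.Subsingleton := by
  intro S hS x hx y hy
  have key : ∀ n : ℕ, (x : lp (fun _ : ℕ => ℝ) 2) n = (y : lp (fun _ : ℕ => ℝ) 2) n := by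
    intro n
    set φ : ErdosC → ℝ := fun z => (z : lp (fun _ : ℕ => ℝ) 2) n with hφ
    have hcont : Continuous φ := (eval_continuous n).comp continuous_subtype_val
    have hT : IsPreconnected (φ '' S) := hS.image φ hcont.continuousOn
    have hTc : (φ '' S).Countable := by
      have : φ '' S ⊆ {0} ∪ Set.range (fun k : ℕ => 1 / (k : ℝ)) := by
        rintro _ ⟨z, hz, rfl⟩
        rcases z.2 n with h | ⟨k, _, h⟩
        · exact Or.inl h
        · exact Or.inr ⟨k, h.symm⟩
      exact ((Set.countable_singleton 0).union (Set.countable_range _)).mono this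
    exact countable_preconnected_subsingleton hTc hT ⟨x, hx, rfl⟩ ⟨y, hy, rfl⟩
  exact Subtype.ext (lp.ext (funext key))
end
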